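/- arXiv:1112.6272 — 4 statements merged into one kernel-verified Lean document; each statement's English description precedes it below -/
import Mathlib

section
/- Let Φ : ℝ^Q → ℝ be continuous and coercive, let H ∈ ℝ^{Q×N} and V₀ ∈ ℝ^{P₀×N} be matrices with Ker H ∩ Ker V₀ = {0} and H ≠ 0, and let y ∈ ℝ^Q. Then the function F(x) = Φ(Hx − y) + ‖V₀x‖² is coercive, i.e., F(x) → +∞ as ‖x‖ → +∞. -/
open Filter

noncomputable def toEuc {n : ℕ} (v : Fin n → ℝ) : EuclideanSpace ℝ (Fin n) :=
  (WithLp.equiv 2 (Fin n → ℝ)).symm v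

theorem stmt0 (N Q P0 : ℕ)
    (Φ : EuclideanSpace ℝ (Fin Q) → ℝ)
    (hΦcont : Continuous Φ)
    (hΦcoer : Tendsto Φ (comap norm atTop) atTop)
    (H : Matrix (Fin Q) (Fin N) ℝ) (hH : H ≠ 0)
    (V0 : Matrix (Fin P0) (Fin N) ℝ)
    (hker : ∀ x : EuclideanSpace ℝ (Fin N),
      H.mulVec x = 0 → V0.mulVec x = 0 → x = 0)
    (y : EuclideanSpace ℝ (Fin Q)) :
    Tendsto (fun x : EuclideanSpace ℝ (Fin N) =>
        Φ (toEuc (H.mulVec x) - y) + ‖toEuc (V0.mulVec x)‖ ^ 2)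
      (comap norm atTop) atTop := by
  -- linear map L x = (toEuc (H x), toEuc (V0 x))
  set e1 := (WithLp.linearEquiv 2 ℝ (Fin N → ℝ))
  let L : EuclideanSpace ℝ (Fin N) →ₗ[ℝ]
      (EuclideanSpace ℝ (Fin Q)) × (EuclideanSpace ℝ (Fin P0)) :=
    LinearMap.prod
      ((WithLp.linearEquiv 2 ℝ (Fin Q → ℝ)).symm.toLinearMap ∘ₗ H.mulVecLin ∘ₗ e1.toLinearMap)
      ((WithLp.linearEquiv 2 ℝ (Fin P0 → ℝ)).symm.toLinearMap ∘ₗ V0.mulVecLin ∘ₗ e1.toLinearMap)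
  have hL1 : ∀ x, (L x).1 = toEuc (H.mulVec x) := fun x => rfl
  have hL2 : ∀ x, (L x).2 = toEuc (V0.mulVec x) := fun x => rfl
  have hLinj : Function.Injective L := by
    rw [← LinearMap.ker_eq_bot, LinearMap.ker_eq_bot']
    intro x hx
    have h1 : toEuc (H.mulVec x) = 0 := congrArg Prod.fst hx
    have h2 : toEuc (V0.mulVec x) = 0 := congrArg Prod.snd hx
    exact hker x ((WithLp.equiv 2 _).symm.injective h1)
      ((WithLp.equiv 2 _).symm.injective h2)
  obtain ⟨K, hKpos, hKanti⟩ := L.injective_iff_antilipschitz.mp hLinj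
  -- lower bound for Φ
  have hcoer' : ∀ M : ℝ, ∃ R : ℝ, ∀ z, R ≤ ‖z‖ → M ≤ Φ z := by
    intro M
    have := eventually_comap.mp (hΦcoer.eventually (eventually_ge_atTop M))
    obtain ⟨R, hR⟩ := eventually_atTop.mp this
    exact ⟨R, fun z hz => hR ‖z‖ hz z rfl⟩
  obtain ⟨R0, hR0⟩ := hcoer' 0
  obtain ⟨B, hB⟩ : ∃ B, ∀ z, B ≤ Φ z := by
    have hc : IsCompact (Metric.closedBall (0 : EuclideanSpace ℝ (Fin Q)) R0) :=
      isCompact_closedBall _ _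
    obtain ⟨B, hB⟩ := (hc.image hΦcont).bddBelow
    refine ⟨min B 0, fun z => ?_⟩
    rcases le_or_gt ‖z‖ R0 with h | h
    · exact le_trans (min_le_left _ _)
        (hB ⟨z, by simpa [Metric.mem_closedBall, dist_zero_right] using h, rfl⟩)
    · exact le_trans (min_le_right _ _) (hR0 z h.le)
  -- main
  rw [tendsto_atTop]
  intro M
  obtain ⟨R1, hR1⟩ := hcoer' M
  set T : ℝ := max (R1 + ‖y‖) (max 1 (M - B)) with hT
  have hT1 : (1:ℝ) ≤ T := le_trans (le_max_left _ _) (le_max_right _ _)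
  have hTpos : (0:ℝ) < T := lt_of_lt_of_le one_pos hT1
  rw [eventually_comap]
  filter_upwards [eventually_ge_atTop ((K:ℝ) * T)] with b hb x hx
  -- ‖L x‖ ≥ T
  have hanti : ‖x‖ ≤ (K:ℝ) * ‖L x‖ := by
    have := hKanti.le_mul_dist x 0
    simpa [map_zero] using this
  have hLx : T ≤ ‖L x‖ := by
    have hxb : (K:ℝ) * T ≤ ‖x‖ := hx ▸ hb
    have : (K:ℝ) * T ≤ (K:ℝ) * ‖L x‖ := le_trans hxb hanti
    exact le_of_mul_le_mul_left this (by exact_mod_cast hKpos)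
  have hmax : T ≤ max ‖(L x).1‖ ‖(L x).2‖ := by
    rwa [Prod.norm_def] at hLx
  rcases le_max_iff.mp hmax with h | h
  · -- ‖Hx‖ large
    have hnorm : R1 ≤ ‖toEuc (H.mulVec x) - y‖ := by
      have h' : T ≤ ‖toEuc (H.mulVec x)‖ := by rwa [hL1] at h
      have := norm_sub_norm_le (toEuc (H.mulVec x)) y
      have hTy : R1 + ‖y‖ ≤ T := le_max_left _ _
      linarith [abs_le.mp (abs_norm_sub_norm_le (toEuc (H.mulVec x)) y)]
    have := hR1 _ hnorm
    nlinarith [sq_nonneg ‖toEuc (V0.mulVec x)‖]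
  · -- ‖V0 x‖ large
    have h' : T ≤ ‖toEuc (V0.mulVec x)‖ := by rwa [hL2] at h
    have hsq : T ^ 2 ≤ ‖toEuc (V0.mulVec x)‖ ^ 2 := by
      apply pow_le_pow_left₀ hTpos.le h'
    have hT2 : M - B ≤ T ^ 2 := by
      have : M - B ≤ T := le_trans (le_max_right _ _) (le_max_right _ _)
      nlinarith
    have := hB (toEuc (H.mulVec x) - y)
    linarith
end

section
/- Let Φ : ℝ^Q → ℝ be continuous and coercive, let H ∈ ℝ^{Q×N}, V₀ ∈ ℝ^{P₀×N} with Ker H ∩ Ker V₀ = {0}, y ∈ ℝ^Q, and for s = 1,…,S let ψ_s : ℝ → ℝ be continuous and nonnegative, V_s ∈ ℝ^{P_s×N}, c_s ∈ ℝ^{P_s}. Then the function F(x) = Φ(Hx − y) + Σ_{s=1}^S ψ_s(‖V_s x − c_s‖) + ‖V₀x‖² attains its minimum on ℝ^N, and its set of minimizers is nonempty and compact. -/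
open Filter

noncomputable def eucMap {m n : ℕ} (M : Matrix (Fin m) (Fin n) ℝ) :
    EuclideanSpace ℝ (Fin n) →ₗ[ℝ] EuclideanSpace ℝ (Fin m) :=
  (WithLp.linearEquiv 2 ℝ (Fin m → ℝ)).symm.toLinearMap ∘ₗ M.mulVecLin ∘ₗ
    (WithLp.linearEquiv 2 ℝ (Fin n → ℝ)).toLinearMap

lemma eucMap_apply {m n : ℕ} (M : Matrix (Fin m) (Fin n) ℝ) (x : EuclideanSpace ℝ (Fin n)) :
    eucMap M x = toEuc (M.mulVec x) := rfl

theorem stmt1 (N Q P0 S : ℕ)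
    (Φ : EuclideanSpace ℝ (Fin Q) → ℝ)
    (hΦcont : Continuous Φ)
    (hΦcoer : Tendsto Φ (comap norm atTop) atTop)
    (H : Matrix (Fin Q) (Fin N) ℝ)
    (V0 : Matrix (Fin P0) (Fin N) ℝ)
    (hker : ∀ x : EuclideanSpace ℝ (Fin N),
      H.mulVec x = 0 → V0.mulVec x = 0 → x = 0)
    (y : EuclideanSpace ℝ (Fin Q))
    (P : Fin S → ℕ)
    (ψ : Fin S → ℝ → ℝ)
    (hψcont : ∀ s, Continuous (ψ s))
    (hψpos : ∀ s t, 0 ≤ ψ s t)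
    (V : ∀ s : Fin S, Matrix (Fin (P s)) (Fin N) ℝ)
    (c : ∀ s : Fin S, EuclideanSpace ℝ (Fin (P s)))
    (F : EuclideanSpace ℝ (Fin N) → ℝ)
    (hF : ∀ x, F x = Φ (toEuc (H.mulVec x) - y)
        + ∑ s, ψ s ‖toEuc ((V s).mulVec x) - c s‖
        + ‖toEuc (V0.mulVec x)‖ ^ 2) :
    {x : EuclideanSpace ℝ (Fin N) | ∀ x', F x ≤ F x'}.Nonempty ∧
      IsCompact {x : EuclideanSpace ℝ (Fin N) | ∀ x', F x ≤ F x'} := by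
  classical
  set A := eucMap H with hA
  set B := eucMap V0 with hB
  have hFeq : F = fun x => Φ (A x - y) + ∑ s, ψ s ‖eucMap (V s) x - c s‖ + ‖B x‖ ^ 2 := by
    funext x
    simp only [hF x, hA, hB, eucMap_apply]
  have hFc : Continuous F := by
    rw [hFeq]
    refine ((hΦcont.comp (A.continuous_of_finiteDimensional.sub continuous_const)).add
      (continuous_finset_sum _ fun s _ => (hψcont s).comp
        (((eucMap (V s)).continuous_of_finiteDimensional.sub continuous_const).norm))).add
      ((B.continuous_of_finiteDimensional.norm).pow 2)
  -- comap norm atTop = cocompact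
  have hcoc : ∀ (n : ℕ), (comap norm atTop : Filter (EuclideanSpace ℝ (Fin n))) = cocompact _ := by
    intro n; rw [comap_norm_atTop, Metric.cobounded_eq_cocompact]
  -- Φ attains a global minimum
  obtain ⟨u₀, hu₀⟩ := hΦcont.exists_forall_le (by rw [← hcoc]; exact hΦcoer)
  set m := Φ u₀ with hm
  -- antilipschitz bound for the combined map
  have hTinj : Function.Injective (A.prod B) := by
    intro x x' hxx
    have h0 : A.prod B (x - x') = 0 := by rw [map_sub, hxx, sub_self]
    have h1 : A (x - x') = 0 := congrArg Prod.fst h0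
    have h2 : B (x - x') = 0 := congrArg Prod.snd h0
    have e1 : H.mulVec (x - x') = 0 := by
      have := congrArg (WithLp.linearEquiv 2 ℝ (Fin Q → ℝ)) h1
      simpa [hA, eucMap] using this
    have e2 : V0.mulVec (x - x') = 0 := by
      have := congrArg (WithLp.linearEquiv 2 ℝ (Fin P0 → ℝ)) h2
      simpa [hB, eucMap] using this
    have := hker _ e1 e2
    exact sub_eq_zero.mp this
  obtain ⟨K, hKpos, hKanti⟩ := (A.prod B).injective_iff_antilipschitz.mp hTinj
  have hKR : (0:ℝ) < (K:ℝ) := hKpos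
  have hnorm_bound : ∀ x : EuclideanSpace ℝ (Fin N), ‖x‖ ≤ (K:ℝ) * (‖A x‖ + ‖B x‖) := by
    intro x
    have h1 : ‖x‖ ≤ (K:ℝ) * ‖A.prod B x‖ := by
      have := hKanti.le_mul_dist x 0
      simpa [dist_eq_norm, map_zero] using this
    refine h1.trans (mul_le_mul_of_nonneg_left ?_ hKR.le)
    have : ‖A.prod B x‖ = max ‖A x‖ ‖B x‖ := rfl
    rw [this]
    exact max_le (le_add_of_nonneg_right (norm_nonneg _))
      (le_add_of_nonneg_left (norm_nonneg _))
  -- F is coercive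
  have hcoerF : Tendsto F (cocompact _) atTop := by
    rw [← hcoc]
    rw [tendsto_atTop]
    intro b
    -- radius R beyond which Φ ≥ b
    have h1 : ∀ᶠ u in comap norm atTop, b ≤ Φ u := hΦcoer.eventually (eventually_ge_atTop b)
    rw [eventually_comap] at h1
    obtain ⟨R, hR⟩ := eventually_atTop.mp h1
    set r := Real.sqrt (max (b - m) 0) with hr
    rw [eventually_comap]
    refine eventually_atTop.mpr ⟨(K:ℝ) * (R + ‖y‖ + r + 1), fun t ht x hx => ?_⟩
    have hxnorm : (K:ℝ) * (R + ‖y‖ + r + 1) ≤ ‖x‖ := by rw [hx]; exact ht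
    have hsum : R + ‖y‖ + r + 1 ≤ ‖A x‖ + ‖B x‖ := by
      have := hxnorm.trans (hnorm_bound x)
      exact le_of_mul_le_mul_left this hKR
    have hψsum : 0 ≤ ∑ s, ψ s ‖toEuc ((V s).mulVec x) - c s‖ :=
      Finset.sum_nonneg fun s _ => hψpos s _
    have hB2 : (0:ℝ) ≤ ‖toEuc (V0.mulVec x)‖ ^ 2 := by positivity
    rw [hF x]
    by_cases hAx : R + ‖y‖ ≤ ‖A x‖
    · have hΦb : b ≤ Φ (toEuc (H.mulVec x) - y) := by
        refine hR ‖toEuc (H.mulVec x) - y‖ ?_ _ rfl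
        have h2 : ‖A x‖ - ‖y‖ ≤ ‖A x - y‖ := norm_sub_norm_le _ _
        have : R ≤ ‖A x - y‖ := by linarith
        simpa [hA, eucMap_apply] using this
      linarith
    · push_neg at hAx
      have hBx : r ≤ ‖B x‖ := by linarith
      have hmb : b - m ≤ ‖B x‖ ^ 2 := by
        have h3 : r ^ 2 ≤ ‖B x‖ ^ 2 := by
          have hrnn : 0 ≤ r := Real.sqrt_nonneg _
          nlinarith
        have h4 : r ^ 2 = max (b - m) 0 := Real.sq_sqrt (le_max_right _ _)
        have h5 : b - m ≤ max (b - m) 0 := le_max_left _ _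
        linarith
      have hΦm : m ≤ Φ (toEuc (H.mulVec x) - y) := hu₀ _
      have : b - m ≤ ‖toEuc (V0.mulVec x)‖ ^ 2 := by
        simpa [hB, eucMap_apply] using hmb
      linarith
  -- conclude
  obtain ⟨x₀, hx₀⟩ := hFc.exists_forall_le hcoerF
  refine ⟨⟨x₀, hx₀⟩, ?_⟩
  have hclosed : IsClosed {x : EuclideanSpace ℝ (Fin N) | ∀ x', F x ≤ F x'} := by
    have heq : {x : EuclideanSpace ℝ (Fin N) | ∀ x', F x ≤ F x'}
        = ⋂ x', {x | F x ≤ F x'} := by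
      ext x; simp
    rw [heq]
    exact isClosed_iInter fun x' => isClosed_le hFc continuous_const
  obtain ⟨t, htc, hts⟩ := mem_cocompact.mp (hcoerF.eventually (eventually_gt_atTop (F x₀)))
  refine htc.of_isClosed_subset hclosed ?_
  intro x hx
  by_contra hxt
  exact absurd (hx x₀) (not_le.mpr (hts hxt))
end

section
/- Let A ∈ ℝ^{N×N} be symmetric with vᵀAv ≥ η‖v‖² for all v and some η > 0, let D ∈ ℝ^{N×M}, g ∈ ℝ^N, and suppose u ∈ ℝ^M satisfies Dᵀg + DᵀA D u = 0. Then η‖D u‖ ≤ ‖g‖. -/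
open Matrix

theorem Matrix.dotProduct_mulVec_transpose_mul_mul {R m n : Type*} [CommSemiring R]
    [Fintype m] [Fintype n] (A : Matrix m m R) (D : Matrix m n R) (u : n → R) :
    u ⬝ᵥ (Dᵀ * A * D) *ᵥ u = D *ᵥ u ⬝ᵥ A *ᵥ (D *ᵥ u) := by
  rw [← mulVec_mulVec, ← mulVec_mulVec, dotProduct_mulVec, vecMul_transpose]

theorem Matrix.dotProduct_mulVec_eq_neg_of_normal_eq {R m n : Type*} [CommRing R]
    [Fintype m] [Fintype n] {A : Matrix m m R} {D : Matrix m n R} {g : m → R} {u : n → R}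
    (hnormal : Dᵀ *ᵥ g + (Dᵀ * A * D) *ᵥ u = 0) :
    D *ᵥ u ⬝ᵥ A *ᵥ (D *ᵥ u) = -(D *ᵥ u ⬝ᵥ g) := by
  have h := congrArg (u ⬝ᵥ ·) hnormal
  simp only [dotProduct_add, dotProduct_zero] at h
  rw [dotProduct_mulVec, vecMul_transpose, dotProduct_mulVec_transpose_mul_mul] at h
  exact eq_neg_of_add_eq_zero_right h

theorem dotProduct_eq_inner_toEuc {n : ℕ} (v w : Fin n → ℝ) :
    v ⬝ᵥ w = inner ℝ (toEuc v) (toEuc w) := by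
  simp [toEuc, EuclideanSpace.inner_eq_star_dotProduct, dotProduct_comm]

theorem mul_norm_le_of_mul_norm_sq_le_neg_inner {E : Type*} [NormedAddCommGroup E]
    [InnerProductSpace ℝ E] {η : ℝ} {x y : E} (h : η * ‖x‖ ^ 2 ≤ -inner ℝ x y) :
    η * ‖x‖ ≤ ‖y‖ := by
  have hcs : η * ‖x‖ * ‖x‖ ≤ ‖y‖ * ‖x‖ := calc
    η * ‖x‖ * ‖x‖ = η * ‖x‖ ^ 2 := by ring
    _ ≤ |inner ℝ x y| := h.trans (neg_le_abs _)
    _ ≤ ‖y‖ * ‖x‖ := (abs_real_inner_le_norm x y).trans_eq (mul_comm _ _)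
  rcases (norm_nonneg x).eq_or_lt with hx | hx
  · rw [← hx, mul_zero]
    exact norm_nonneg y
  · exact le_of_mul_le_mul_right hcs hx

theorem stmt18_general (N M : ℕ) (A : Matrix (Fin N) (Fin N) ℝ)
    (η : ℝ)
    (hcoer : ∀ v : Fin N → ℝ, η * ‖toEuc v‖ ^ 2 ≤ v ⬝ᵥ A.mulVec v)
    (D : Matrix (Fin N) (Fin M) ℝ) (g : Fin N → ℝ) (u : Fin M → ℝ)
    (hnormal : Dᵀ.mulVec g + (Dᵀ * A * D).mulVec u = 0) :
    η * ‖toEuc (D.mulVec u)‖ ≤ ‖toEuc g‖ := by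
  apply mul_norm_le_of_mul_norm_sq_le_neg_inner
  rw [← dotProduct_eq_inner_toEuc, ← dotProduct_mulVec_eq_neg_of_normal_eq hnormal]
  exact hcoer _

theorem stmt18 (N M : ℕ) (A : Matrix (Fin N) (Fin N) ℝ) (hsymm : A.IsSymm)
    (η : ℝ) (hη : 0 < η)
    (hcoer : ∀ v : Fin N → ℝ, η * ‖toEuc v‖ ^ 2 ≤ v ⬝ᵥ A.mulVec v)
    (D : Matrix (Fin N) (Fin M) ℝ) (g : Fin N → ℝ) (u : Fin M → ℝ)
    (hnormal : Dᵀ.mulVec g + (Dᵀ * A * D).mulVec u = 0) :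
    η * ‖toEuc (D.mulVec u)‖ ≤ ‖toEuc g‖ :=
  stmt18_general N M A η hcoer D g u hnormal
end

section
/- Let f : ℝ^M → ℝ be differentiable, let u' ∈ ℝ^M, let B ∈ ℝ^{M×M} be symmetric positive semidefinite, and define q(u) = f(u') + ⟨∇f(u'), u − u'⟩ + (1/2)(u − u')ᵀB(u − u'). Suppose q(u) ≥ f(u) for all u, and let u⁺ be a minimizer of q satisfying B(u⁺ − u') + ∇f(u') = 0. Then f(u') − f(u⁺) ≥ (1/2)(u⁺ − u')ᵀB(u⁺ − u'). In particular, if vᵀBv ≥ η‖v‖² for all v and some η > 0, then f(u') − f(u⁺) ≥ (η/2)‖u⁺ − u'‖². -/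
/-! At the critical point the linear term of the majorant equals `-dᵀBd` with `d = u⁺ - u'`, so
`q(u⁺) = f(u') - ½ dᵀBd`, and majorization `f(u⁺) ≤ q(u⁺)` is the claimed decrease. -/

open Matrix

theorem EuclideanSpace.inner_eq_neg_dotProduct_mulVec_of_mulVec_add_eq_zero {ι : Type*}
    [Fintype ι] {B : Matrix ι ι ℝ} {d g : EuclideanSpace ℝ ι} (h : B *ᵥ d.ofLp + g.ofLp = 0) :
    inner ℝ g d = -(d.ofLp ⬝ᵥ B *ᵥ d.ofLp) := by
  rw [EuclideanSpace.inner_eq_star_dotProduct, star_trivial, eq_neg_of_add_eq_zero_right h,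
    dotProduct_neg]

theorem stmt19_general (M : ℕ) (f : EuclideanSpace ℝ (Fin M) → ℝ)
    (u' : EuclideanSpace ℝ (Fin M))
    (B : Matrix (Fin M) (Fin M) ℝ)
    (q : EuclideanSpace ℝ (Fin M) → ℝ)
    (hq : ∀ u, q u = f u' + inner ℝ (gradient f u') (u - u')
        + (1 / 2) * ((u - u') ⬝ᵥ B.mulVec (u - u' : EuclideanSpace ℝ (Fin M))))
    (hmaj : ∀ u, f u ≤ q u)
    (uplus : EuclideanSpace ℝ (Fin M))
    (hcrit : (fun i => B.mulVec (uplus - u' : EuclideanSpace ℝ (Fin M)) i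
        + gradient f u' i) = fun _ => 0) :
    (1 / 2) * ((uplus - u') ⬝ᵥ B.mulVec (uplus - u' : EuclideanSpace ℝ (Fin M)))
        ≤ f u' - f uplus ∧
      ∀ η : ℝ, 0 < η →
        (∀ v : EuclideanSpace ℝ (Fin M), η * ‖v‖ ^ 2 ≤ v ⬝ᵥ B.mulVec v) →
          η / 2 * ‖uplus - u'‖ ^ 2 ≤ f u' - f uplus := by
  have hlinear := EuclideanSpace.inner_eq_neg_dotProduct_mulVec_of_mulVec_add_eq_zero hcrit
  have hdecrease : (1 / 2) * ((uplus - u') ⬝ᵥ B.mulVec (uplus - u' : EuclideanSpace ℝ (Fin M)))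
      ≤ f u' - f uplus := by
    have := hmaj uplus
    rw [hq, hlinear] at this
    linarith
  exact ⟨hdecrease, fun η _ hB => by linarith [hB (uplus - u')]⟩

theorem stmt19 (M : ℕ) (f : EuclideanSpace ℝ (Fin M) → ℝ)
    (hdiff : Differentiable ℝ f)
    (u' : EuclideanSpace ℝ (Fin M))
    (B : Matrix (Fin M) (Fin M) ℝ) (hsymm : B.IsSymm)
    (hpsd : ∀ v : Fin M → ℝ, 0 ≤ v ⬝ᵥ B.mulVec v)
    (q : EuclideanSpace ℝ (Fin M) → ℝ)
    (hq : ∀ u, q u = f u' + inner ℝ (gradient f u') (u - u')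
        + (1 / 2) * ((u - u') ⬝ᵥ B.mulVec (u - u' : EuclideanSpace ℝ (Fin M))))
    (hmaj : ∀ u, f u ≤ q u)
    (uplus : EuclideanSpace ℝ (Fin M))
    (hmin : ∀ u, q uplus ≤ q u)
    (hcrit : (fun i => B.mulVec (uplus - u' : EuclideanSpace ℝ (Fin M)) i
        + gradient f u' i) = fun _ => 0) :
    (1 / 2) * ((uplus - u') ⬝ᵥ B.mulVec (uplus - u' : EuclideanSpace ℝ (Fin M)))
        ≤ f u' - f uplus ∧
      ∀ η : ℝ, 0 < η →
        (∀ v : EuclideanSpace ℝ (Fin M), η * ‖v‖ ^ 2 ≤ v ⬝ᵥ B.mulVec v) →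
          η / 2 * ‖uplus - u'‖ ^ 2 ≤ f u' - f uplus :=
  stmt19_general M f u' B q hq hmaj uplus hcrit
end
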